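/- arXiv:1602.02531 — 3 statements merged into one kernel-verified Lean document; each statement's English description precedes it below -/
import Mathlib

section
/- The maximum cardinality A_q(n,d) of a code C ⊆ [q]^n with minimum Hamming distance at least d is at most the optimal value B_q(n,d) of the semidefinite program: maximize ∑_{w∈[q]^n} x({w}) over functions x : C_4 → ℝ≥0 (where C_4 is the set of codes of size at most 4) satisfying x(∅)=1, x(C)=0 whenever C has two distinct elements at Hamming distance less than d, and the C_2×C_2 matrix M(x) with M(x)_{C,C'} = x(C ∪ C') positive semidefinite. -/
open Finset

/-- `A_q(n,d) ≤ B_q(n,d)`.  For every code `D ⊆ [q]^n` with minimum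
Hamming distance at least `d` there is a feasible solution `x : C₄ → ℝ≥0` of the
semidefinite program (nonnegative on `C₄`, `x ∅ = 1`, `x C = 0` whenever `C`
contains two distinct words at distance `< d`, and the `C₂ × C₂` matrix
`M(x)_{C,C'} = x (C ∪ C')` positive semidefinite) whose objective value
`∑_{w ∈ [q]^n} x {w}` is at least `|D|`.  Hence the maximum `A_q(n,d)` is at most
the optimum `B_q(n,d)` of the program. -/
theorem code_card_le_sdp_bound (q n d : ℕ) (hq : 2 ≤ q)
    (D : Finset (Fin n → Fin q))
    (hD : ∀ u ∈ D, ∀ v ∈ D, u ≠ v → d ≤ hammingDist u v) :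
    ∃ x : Finset (Fin n → Fin q) → ℝ,
      (∀ C, C.card ≤ 4 → 0 ≤ x C) ∧
      x ∅ = 1 ∧
      (∀ C, C.card ≤ 4 → (∃ u ∈ C, ∃ v ∈ C, u ≠ v ∧ hammingDist u v < d) → x C = 0) ∧
      (Matrix.PosSemidef
        (fun C C' : {C : Finset (Fin n → Fin q) // C.card ≤ 2} =>
          x (C.1 ∪ C'.1))) ∧
      (D.card : ℝ) ≤ ∑ w : Fin n → Fin q, x {w} := by
  classical
  refine ⟨fun C => if C ⊆ D then 1 else 0, ?_, ?_, ?_, ?_, ?_⟩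
  · intro C _; positivity
  · simp
  · intro C _ ⟨u, hu, v, hv, huv, hlt⟩
    simp only
    rw [if_neg]
    intro hCD
    exact absurd (hD u (hCD hu) v (hCD hv) huv) (not_le.mpr hlt)
  · set A : Matrix Unit {C : Finset (Fin n → Fin q) // C.card ≤ 2} ℝ :=
      Matrix.of fun _ C => if C.1 ⊆ D then 1 else 0 with hA
    have hfac : (Matrix.of fun C C' : {C : Finset (Fin n → Fin q) // C.card ≤ 2} =>
        (if C.1 ∪ C'.1 ⊆ D then (1:ℝ) else 0)) = A.conjTranspose * A := by
      ext C C'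
      simp only [Matrix.mul_apply, Matrix.conjTranspose_apply, Matrix.of_apply, hA,
        Finset.univ_unique, Finset.sum_singleton, star_trivial]
      by_cases h1 : C.1 ⊆ D <;> by_cases h2 : C'.1 ⊆ D <;>
        simp [h1, h2, union_subset_iff]
    show Matrix.PosSemidef (Matrix.of fun C C' : {C : Finset (Fin n → Fin q) // C.card ≤ 2} =>
        (if C.1 ∪ C'.1 ⊆ D then (1:ℝ) else 0))
    rw [hfac]
    exact Matrix.posSemidef_conjTranspose_mul_self A
  · have h : ∑ w : Fin n → Fin q, ((fun C => if C ⊆ D then (1:ℝ) else 0) {w}) = D.card := by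
      simp only [← Finset.sum_filter]
      simp [Finset.singleton_subset_iff, Finset.filter_mem_eq_inter]
    exact h.ge
end

section
/- For λ ⊢ n, m ∈ ℕ, and semistandard tableaux τ, σ ∈ T_{λ,m}, the polynomial p_{τ,σ}(X) = ∑_{τ'∼τ, σ'∼σ} ∑_{c,c'∈C_λ} sgn(c c') ∏_{y∈Y(λ)} x_{τ'c(y), σ'c'(y)} satisfies p_{τ,σ}(X) = |C_λ| · ∑_{τ'∼τ, σ'∼σ} ∏_{j=1}^{λ_1} det((x_{τ'(i,j), σ'(i',j)})_{i,i'=1}^{λ*_j}). -/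
/-! For fixed `τ', σ'`, the substitution `d = c' c⁻¹` (together with `y ↦ c⁻¹ y` in the product)
makes the inner double sum over `C_λ` equal to `|C_λ| · ∑_{d ∈ C_λ} sgn d ∏_y x_{τ'(y), σ'(d y)}`.
That sum is the Leibniz expansion of the determinant of the matrix `(x_{τ'(y), σ'(z)})_{y,z ∈ Y(λ)}`
with all entries between different columns replaced by `0`: a permutation moving a cell to
another column meets a zero entry. This matrix is block diagonal with one block per column, and
since `λ` is a partition, column `j` consists of the cells `(j, i)` with `i < λ*_j`, so the
determinant is the product of the column determinants. -/

open Finset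

section Tableaux

variable (l : ℕ → ℕ) (t : ℕ) (m : ℕ)

/-- The Young shape of the partition `λ = (l 0 ≥ l 1 ≥ ⋯ ≥ l (t-1))` (written
0-based): the cells `(c, r)` with `r < t` and `c < l r` (`c` the column index,
`r` the row index). -/
def YoungShape : Finset (ℕ × ℕ) :=
  (range (l 0) ×ˢ range t).filter (fun p => p.1 < l p.2)

/-- The row stabilizer `R_λ`: permutations of the shape preserving each row. -/
def rowStab : Finset (Equiv.Perm {p // p ∈ YoungShape l t}) :=
  univ.filter (fun π => ∀ y, ((π y : ℕ × ℕ)).2 = ((y : ℕ × ℕ)).2)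

/-- The column stabilizer `C_λ`: permutations of the shape preserving each
column. -/
def colStab : Finset (Equiv.Perm {p // p ∈ YoungShape l t}) :=
  univ.filter (fun π => ∀ y, ((π y : ℕ × ℕ)).1 = ((y : ℕ × ℕ)).1)

/-- The row-equivalence class `{τ' : τ' ∼ τ}` of a tableau
`τ : Y(λ) → [m]`, consisting of the tableaux `τ ∘ r` for `r ∈ R_λ`. -/
def rowClass (τ : {p // p ∈ YoungShape l t} → Fin m) :
    Finset ({p // p ∈ YoungShape l t} → Fin m) :=
  (rowStab l t).image (fun r => fun y => τ (r y))

/-- `τ` is semistandard: entries nondecreasing along rows and strictly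
increasing down columns. -/
def IsSemistandard (τ : {p // p ∈ YoungShape l t} → Fin m) : Prop :=
  (∀ p p' : {p // p ∈ YoungShape l t}, ((p : ℕ × ℕ)).2 = ((p' : ℕ × ℕ)).2 →
    ((p : ℕ × ℕ)).1 ≤ ((p' : ℕ × ℕ)).1 → τ p ≤ τ p') ∧
  (∀ p p' : {p // p ∈ YoungShape l t}, ((p : ℕ × ℕ)).1 = ((p' : ℕ × ℕ)).1 →
    ((p : ℕ × ℕ)).2 < ((p' : ℕ × ℕ)).2 → τ p < τ p')

/-- Extension of a tableau to all of `ℕ × ℕ` (with junk value outside the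
shape), convenient for indexing. -/
def extTab (hm : 0 < m) (τ : {p // p ∈ YoungShape l t} → Fin m) : ℕ × ℕ → Fin m :=
  fun p => if h : p ∈ YoungShape l t then τ ⟨p, h⟩ else ⟨0, hm⟩

/-- The height `λ*_c` of column `c` of the shape. -/
def colHeight (c : ℕ) : ℕ := ((range t).filter (fun r => c < l r)).card

end Tableaux

open Equiv Equiv.Perm

section FiberPerms

variable {κ ι R : Type*} [Fintype κ] [DecidableEq κ] [DecidableEq ι] [CommRing R]

def fiberPerms (col : κ → ι) : Finset (Perm κ) :=
  univ.filter fun d => ∀ y, col (d y) = col y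

theorem mem_fiberPerms {col : κ → ι} {d : Perm κ} :
    d ∈ fiberPerms col ↔ ∀ y, col (d y) = col y := by
  simp [fiberPerms]

theorem mul_mem_fiberPerms {col : κ → ι} {a b : Perm κ} (ha : a ∈ fiberPerms col)
    (hb : b ∈ fiberPerms col) : a * b ∈ fiberPerms col := by
  rw [mem_fiberPerms] at *
  intro y
  rw [mul_apply, ha, hb]

theorem inv_mem_fiberPerms {col : κ → ι} {a : Perm κ} (ha : a ∈ fiberPerms col) :
    a⁻¹ ∈ fiberPerms col := by
  rw [mem_fiberPerms] at *
  intro y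
  simpa using (ha (a⁻¹ y)).symm

theorem det_fiberMask (col : κ → ι) (A : Matrix κ κ R) :
    (Matrix.of fun y z => if col y = col z then A y z else 0).det
      = ∑ d ∈ fiberPerms col, ((sign d : ℤ) : R) * ∏ y, A y (d y) := by
  rw [← Matrix.det_transpose, Matrix.det_apply', fiberPerms, sum_filter]
  refine sum_congr rfl fun d _ => ?_
  split_ifs with hd
  · simp [hd]
  · obtain ⟨y, hy⟩ := not_forall.1 hd
    rw [prod_eq_zero (mem_univ y) (by simp [Ne.symm hy]), mul_zero]

end FiberPerms

theorem sum_sign_mul_sign_mul_prod {κ R : Type*} [Fintype κ] [DecidableEq κ] [CommRing R]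
    {S : Finset (Perm κ)} (hmul : ∀ a ∈ S, ∀ b ∈ S, a * b ∈ S) (hinv : ∀ a ∈ S, a⁻¹ ∈ S)
    (F : κ → κ → R) :
    ∑ c ∈ S, ∑ c' ∈ S, (((sign c : ℤ) * (sign c' : ℤ) : ℤ) : R) * ∏ y, F (c y) (c' y)
      = #S * ∑ d ∈ S, ((sign d : ℤ) : R) * ∏ y, F y (d y) := by
  rw [← nsmul_eq_mul, ← sum_const]
  refine sum_congr rfl fun c hc => ?_
  refine sum_nbij' (· * c⁻¹) (· * c) (fun a ha => hmul a ha _ (hinv c hc))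
    (fun a ha => hmul a ha c hc) (by simp) (by simp) fun c' _ => ?_
  rw [← Equiv.prod_comp c fun y => F y ((c' * c⁻¹) y)]
  simp only [Perm.sign_mul, sign_inv, mul_apply, coe_inv, symm_apply_apply]
  push_cast
  ring

section YoungShape

variable {l : ℕ → ℕ} {t : ℕ}

theorem mem_youngShape (hanti : Antitone l) {p : ℕ × ℕ} :
    p ∈ YoungShape l t ↔ p.2 < t ∧ p.1 < l p.2 := by
  simp only [YoungShape, mem_filter, mem_product, mem_range]
  exact ⟨fun h => ⟨h.1.2, h.2⟩, fun h => ⟨⟨h.2.trans_le (hanti (Nat.zero_le _)), h.1⟩, h.2⟩⟩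

theorem lt_colHeight_iff (hanti : Antitone l) {j r : ℕ} :
    r < colHeight l t j ↔ r < t ∧ j < l r := by
  constructor
  · intro h
    by_contra hr
    have hsub : (range t).filter (fun s => j < l s) ⊆ range r := fun s hs => by
      simp only [mem_filter, mem_range] at hs ⊢
      by_contra hsr
      exact hr ⟨by omega, hs.2.trans_le (hanti (not_lt.1 hsr))⟩
    simpa [colHeight] using h.trans_le (card_le_card hsub)
  · rintro ⟨hrt, hjr⟩
    have hsub : range (r + 1) ⊆ (range t).filter (fun s => j < l s) := fun s hs => by
      simp only [mem_filter, mem_range] at hs ⊢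
      exact ⟨by omega, hjr.trans_le (hanti (by omega))⟩
    simpa [colHeight] using card_le_card hsub

def youngShapeColumn (y : {p // p ∈ YoungShape l t}) : Fin (l 0) :=
  ⟨(y : ℕ × ℕ).1, by
    have hy := y.2
    simp only [YoungShape, mem_filter, mem_product, mem_range] at hy
    exact hy.1.1⟩

def youngShapeColumnEquiv (hanti : Antitone l) (j : Fin (l 0)) :
    {y : {p // p ∈ YoungShape l t} // youngShapeColumn y = j} ≃ Fin (colHeight l t j) where
  toFun y := ⟨(y : ℕ × ℕ).2, by
    have hcol : (y : ℕ × ℕ).1 = j := congrArg Fin.val y.2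
    exact (lt_colHeight_iff hanti).2 (hcol ▸ (mem_youngShape hanti).1 y.1.2)⟩
  invFun i :=
    ⟨⟨((j : ℕ), (i : ℕ)), (mem_youngShape hanti).2 ((lt_colHeight_iff hanti).1 i.2)⟩, rfl⟩
  left_inv y := Subtype.ext <| Subtype.ext <| Prod.ext (congrArg Fin.val y.2).symm rfl
  right_inv _ := rfl

theorem colStab_eq_fiberPerms :
    colStab l t = fiberPerms fun y : {p // p ∈ YoungShape l t} => (y : ℕ × ℕ).1 :=
  rfl

variable {R : Type*} [CommRing R] {m : ℕ}

theorem det_fiberMask_youngShape (hanti : Antitone l) (hm : 0 < m)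
    (f g : {p // p ∈ YoungShape l t} → Fin m) (X : Fin m → Fin m → R) :
    (Matrix.of fun y z : {p // p ∈ YoungShape l t} =>
        if (y : ℕ × ℕ).1 = (z : ℕ × ℕ).1 then X (f y) (g z) else 0).det
      = ∏ j ∈ range (l 0), (Matrix.of fun i i' : Fin (colHeight l t j) =>
          X (extTab l t m hm f (j, (i : ℕ))) (extTab l t m hm g (j, (i' : ℕ)))).det := by
  have hblock : (Matrix.of fun y z : {p // p ∈ YoungShape l t} =>
      if (y : ℕ × ℕ).1 = (z : ℕ × ℕ).1 then X (f y) (g z) else 0).BlockTriangular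
        youngShapeColumn := fun y z hzy => if_neg fun h => hzy.ne (Fin.ext h.symm)
  rw [hblock.det_fintype, ← Fin.prod_univ_eq_prod_range (fun j =>
    (Matrix.of fun i i' : Fin (colHeight l t j) =>
      X (extTab l t m hm f (j, (i : ℕ))) (extTab l t m hm g (j, (i' : ℕ)))).det)]
  refine prod_congr rfl fun j _ => ?_
  rw [← Matrix.det_reindex_self (youngShapeColumnEquiv hanti j)]
  congr 1
  ext i i'
  have hmem (r : Fin (colHeight l t j)) : ((j : ℕ), (r : ℕ)) ∈ YoungShape l t :=
    (mem_youngShape hanti).2 ((lt_colHeight_iff hanti).1 r.2)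
  simp [Matrix.toSquareBlock, Matrix.toSquareBlockProp, youngShapeColumnEquiv, extTab, hmem]

theorem sum_colStab_sign_mul_sign_mul_prod (hanti : Antitone l) (hm : 0 < m)
    (f g : {p // p ∈ YoungShape l t} → Fin m) (X : Fin m → Fin m → R) :
    ∑ c ∈ colStab l t, ∑ c' ∈ colStab l t,
      (((sign c : ℤ) * (sign c' : ℤ) : ℤ) : R) * ∏ y, X (f (c y)) (g (c' y))
    = #(colStab l t) * ∏ j ∈ range (l 0), (Matrix.of fun i i' : Fin (colHeight l t j) =>
          X (extTab l t m hm f (j, (i : ℕ))) (extTab l t m hm g (j, (i' : ℕ)))).det := by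
  rw [colStab_eq_fiberPerms,
    sum_sign_mul_sign_mul_prod (fun _ ha _ hb => mul_mem_fiberPerms ha hb)
      (fun _ ha => inv_mem_fiberPerms ha) fun a b => X (f a) (g b),
    ← det_fiberMask_youngShape hanti hm, det_fiberMask _ fun a b => X (f a) (g b)]

end YoungShape

theorem ptausigma_eq_det_form_general
    (t m : ℕ) (hm : 0 < m) (l : ℕ → ℕ)
    (hanti : Antitone l)
    (τ σ : {p // p ∈ YoungShape l t} → Fin m)
    (X : Fin m → Fin m → ℝ) :
    ∑ τ' ∈ rowClass l t m τ, ∑ σ' ∈ rowClass l t m σ,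
      ∑ c ∈ colStab l t, ∑ c' ∈ colStab l t,
        (((Equiv.Perm.sign c : ℤ) * (Equiv.Perm.sign c' : ℤ) : ℤ) : ℝ) *
          ∏ y : {p // p ∈ YoungShape l t}, X (τ' (c y)) (σ' (c' y))
    = ((colStab l t).card : ℝ) *
        ∑ τ' ∈ rowClass l t m τ, ∑ σ' ∈ rowClass l t m σ,
          ∏ j ∈ range (l 0),
            Matrix.det (Matrix.of
              (fun i i' : Fin (colHeight l t j) =>
                X (extTab l t m hm τ' (j, (i : ℕ)))
                  (extTab l t m hm σ' (j, (i' : ℕ))))) := by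
  simp_rw [mul_sum, sum_colStab_sign_mul_sign_mul_prod hanti hm]

/-- for a partition `λ ⊢ n` of height `t` (row lengths
`l 0 ≥ l 1 ≥ ⋯`) and semistandard tableaux `τ, σ ∈ T_{λ,m}`, the polynomial
`p_{τ,σ}(X) = ∑_{τ'∼τ, σ'∼σ} ∑_{c,c'∈C_λ} sgn(c c') ∏_{y∈Y(λ)} x_{τ'c(y), σ'c'(y)}`
equals `|C_λ| · ∑_{τ'∼τ, σ'∼σ} ∏_{j} det((x_{τ'(i,j), σ'(i',j)})_{i,i'=1}^{λ*_j})`,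
the product running over the columns `j` of the shape. -/
theorem ptausigma_eq_det_form
    (n t m : ℕ) (hm : 0 < m) (l : ℕ → ℕ)
    (hl0 : ∀ r, t ≤ r → l r = 0)
    (hlpos : ∀ r, r < t → 0 < l r)
    (hanti : Antitone l)
    (hsum : ∑ r ∈ range t, l r = n)
    (τ σ : {p // p ∈ YoungShape l t} → Fin m)
    (hτ : IsSemistandard l t m τ) (hσ : IsSemistandard l t m σ)
    (X : Fin m → Fin m → ℝ) :
    ∑ τ' ∈ rowClass l t m τ, ∑ σ' ∈ rowClass l t m σ,
      ∑ c ∈ colStab l t, ∑ c' ∈ colStab l t,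
        (((Equiv.Perm.sign c : ℤ) * (Equiv.Perm.sign c' : ℤ) : ℤ) : ℝ) *
          ∏ y : {p // p ∈ YoungShape l t}, X (τ' (c y)) (σ' (c' y))
    = ((colStab l t).card : ℝ) *
        ∑ τ' ∈ rowClass l t m τ, ∑ σ' ∈ rowClass l t m σ,
          ∏ j ∈ range (l 0),
            Matrix.det (Matrix.of
              (fun i i' : Fin (colHeight l t j) =>
                X (extTab l t m hm τ' (j, (i : ℕ)))
                  (extTab l t m hm σ' (j, (i' : ℕ))))) :=
  ptausigma_eq_det_form_general t m hm l hanti τ σ X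
end

section
/- For q ≥ 3, with M = E_{1,2}+E_{2,3}+E_{3,1}−E_{2,1}−E_{3,2}−E_{1,3} ∈ ℝ^{q×q}, the tensor M ⊗ M, as a linear functional on ℝ^{q×q} ⊗ ℝ^{q×q}, equals 6(d*_{13,24} − d*_{14,23} − d*_{13,2,4} + d*_{14,2,3} + d*_{1,23,4} − d*_{1,24,3}) in terms of the dual basis {d*_P} of the S_q-invariant subspace; equivalently, (M⊗M)(d_{13,24}) = 6, (M⊗M)(d_{14,23}) = −6, (M⊗M)(d_{13,2,4}) = −6, (M⊗M)(d_{14,2,3}) = 6, (M⊗M)(d_{1,23,4}) = 6, (M⊗M)(d_{1,24,3}) = −6, and (M⊗M)(d_P) = 0 for all other partitions P. -/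
open Finset

/-- The coincidence pattern (`part`) of a word `w ∈ [q]^4`, encoded as the
Boolean matrix `(i,j) ↦ (w i = w j)`; two words have the same pattern iff they
determine the same set partition of `{1,2,3,4}`. -/
def pattern {q : ℕ} (w : Fin 4 → Fin q) : Fin 4 → Fin 4 → Bool :=
  fun i j => decide (w i = w j)

/-- The matrix `M = E_{1,2}+E_{2,3}+E_{3,1}−E_{2,1}−E_{3,2}−E_{1,3}` (written
with 0-based indices). -/
def skewM (q : ℕ) : Fin q → Fin q → ℝ := fun a b =>
  (if ((a : ℕ), (b : ℕ)) = (0, 1) then (1 : ℝ) else 0)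
  + (if ((a : ℕ), (b : ℕ)) = (1, 2) then 1 else 0)
  + (if ((a : ℕ), (b : ℕ)) = (2, 0) then 1 else 0)
  - (if ((a : ℕ), (b : ℕ)) = (1, 0) then 1 else 0)
  - (if ((a : ℕ), (b : ℕ)) = (2, 1) then 1 else 0)
  - (if ((a : ℕ), (b : ℕ)) = (0, 2) then 1 else 0)

/-- The evaluation `(M ⊗ M)(d_P)` where
`d_P = ∑_{w ∈ [q]^4, part w = P} e_{w₁}e_{w₂}ᵀ ⊗ e_{w₃}e_{w₄}ᵀ` and a matrix `A`
acts as the functional `X ↦ ∑_{ij} A_{ij} X_{ij}`. -/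
def evalMM (q : ℕ) (P : Fin 4 → Fin 4 → Bool) : ℝ :=
  ∑ w : Fin 4 → Fin q, if pattern w = P then skewM q (w 0) (w 1) * skewM q (w 2) (w 3)
  else 0

/-- Integer version of `skewM` on `Fin 3`. -/
def skewZ : Fin 3 → Fin 3 → ℤ := fun a b =>
  (if ((a : ℕ), (b : ℕ)) = (0, 1) then (1 : ℤ) else 0)
  + (if ((a : ℕ), (b : ℕ)) = (1, 2) then 1 else 0)
  + (if ((a : ℕ), (b : ℕ)) = (2, 0) then 1 else 0)
  - (if ((a : ℕ), (b : ℕ)) = (1, 0) then 1 else 0)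
  - (if ((a : ℕ), (b : ℕ)) = (2, 1) then 1 else 0)
  - (if ((a : ℕ), (b : ℕ)) = (0, 2) then 1 else 0)

/-- Integer version of `evalMM`, summing only over words with letters in `{0,1,2}`. -/
def evalZ (P : Fin 4 → Fin 4 → Bool) : ℤ :=
  ∑ v : Fin 4 → Fin 3, if pattern v = P then skewZ (v 0) (v 1) * skewZ (v 2) (v 3) else 0

lemma skewM_eq_zero {q : ℕ} {a b : Fin q} (h : 3 ≤ (a : ℕ) ∨ 3 ≤ (b : ℕ)) :
    skewM q a b = 0 := by
  unfold skewM
  rcases h with h | h <;>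
    rw [if_neg (by simp; omega), if_neg (by simp; omega), if_neg (by simp; omega),
      if_neg (by simp; omega), if_neg (by simp; omega), if_neg (by simp; omega)] <;> ring

lemma skewM_castLE {q : ℕ} (hq : 3 ≤ q) (a b : Fin 3) :
    skewM q (Fin.castLE hq a) (Fin.castLE hq b) = (skewZ a b : ℝ) := by
  unfold skewM skewZ
  push_cast
  simp [Fin.coe_castLE]

lemma evalMM_eq (q : ℕ) (hq : 3 ≤ q) (P : Fin 4 → Fin 4 → Bool) :
    evalMM q P = ((evalZ P : ℤ) : ℝ) := by
  classical
  set g : (Fin 4 → Fin 3) → (Fin 4 → Fin q) := fun v i => Fin.castLE hq (v i) with hgdef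
  have hg : Function.Injective g := by
    intro v v' h
    funext i
    have := congrFun h i
    exact Fin.castLE_injective hq this
  have hzero : ∀ w ∈ (univ : Finset (Fin 4 → Fin q)), w ∉ univ.image g →
      (if pattern w = P then skewM q (w 0) (w 1) * skewM q (w 2) (w 3) else 0) = 0 := by
    intro w _ hw
    have : ∃ i, 3 ≤ (w i : ℕ) := by
      by_contra hcon
      push_neg at hcon
      exact hw (Finset.mem_image.2 ⟨fun i => ⟨(w i : ℕ), hcon i⟩, Finset.mem_univ _,
        by funext i; simp [hgdef, Fin.ext_iff]⟩)
    obtain ⟨i, hi⟩ := this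
    have hprod : skewM q (w 0) (w 1) * skewM q (w 2) (w 3) = 0 := by
      fin_cases i
      · exact mul_eq_zero_of_left (skewM_eq_zero (Or.inl hi)) _
      · exact mul_eq_zero_of_left (skewM_eq_zero (Or.inr hi)) _
      · exact mul_eq_zero_of_right _ (skewM_eq_zero (Or.inl hi))
      · exact mul_eq_zero_of_right _ (skewM_eq_zero (Or.inr hi))
    simp [hprod]
  have h1 : evalMM q P = ∑ w ∈ univ.image g,
      (if pattern w = P then skewM q (w 0) (w 1) * skewM q (w 2) (w 3) else 0) :=
    (Finset.sum_subset (Finset.subset_univ _) hzero).symm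
  rw [h1, Finset.sum_image (fun a _ b _ h => hg h)]
  have hpat : ∀ v : Fin 4 → Fin 3, pattern (g v) = pattern v := by
    intro v
    funext i j
    simp [pattern, hgdef, Fin.castLE_inj]
  unfold evalZ
  push_cast [apply_ite (fun x : ℤ => (x : ℝ))]
  refine Finset.sum_congr rfl fun v _ => ?_
  rw [hpat v]
  simp only [hgdef]
  rw [skewM_castLE hq, skewM_castLE hq]

lemma pattern_eq_of_val {q q' : ℕ} (w : Fin 4 → Fin q) (v : Fin 4 → Fin q')
    (h : ∀ i, (w i : ℕ) = (v i : ℕ)) : pattern w = pattern v := by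
  funext i j
  simp only [pattern, decide_eq_decide, Fin.ext_iff, h i, h j]

set_option maxRecDepth 40000 in
lemma evalZ_vals :
    evalZ (pattern (![0,1,0,1] : Fin 4 → Fin 3)) = 6 ∧
    evalZ (pattern (![0,1,1,0] : Fin 4 → Fin 3)) = -6 ∧
    evalZ (pattern (![0,1,0,2] : Fin 4 → Fin 3)) = -6 ∧
    evalZ (pattern (![0,1,2,0] : Fin 4 → Fin 3)) = 6 ∧
    evalZ (pattern (![0,1,1,2] : Fin 4 → Fin 3)) = 6 ∧
    evalZ (pattern (![0,1,2,1] : Fin 4 → Fin 3)) = -6 := by decide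

lemma pattern_mem_six : ∀ v : Fin 4 → Fin 3, skewZ (v 0) (v 1) * skewZ (v 2) (v 3) ≠ 0 →
    pattern v = pattern (![0,1,0,1] : Fin 4 → Fin 3) ∨
    pattern v = pattern (![0,1,1,0] : Fin 4 → Fin 3) ∨
    pattern v = pattern (![0,1,0,2] : Fin 4 → Fin 3) ∨
    pattern v = pattern (![0,1,2,0] : Fin 4 → Fin 3) ∨
    pattern v = pattern (![0,1,1,2] : Fin 4 → Fin 3) ∨
    pattern v = pattern (![0,1,2,1] : Fin 4 → Fin 3) := by decide

/-- for `q ≥ 3`,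
`M ⊗ M = 6(d*_{13,24} − d*_{14,23} − d*_{13,2,4} + d*_{14,2,3} + d*_{1,23,4} − d*_{1,24,3})`,
i.e. `(M⊗M)(d_{13,24}) = 6`, `(M⊗M)(d_{14,23}) = −6`, `(M⊗M)(d_{13,2,4}) = −6`,
`(M⊗M)(d_{14,2,3}) = 6`, `(M⊗M)(d_{1,23,4}) = 6`, `(M⊗M)(d_{1,24,3}) = −6`, and
`(M⊗M)(d_P) = 0` for all other partitions `P`.  Each of the six partitions is
given as the pattern of a representative word: `13,24 ↦ (0,1,0,1)`,
`14,23 ↦ (0,1,1,0)`, `13,2,4 ↦ (0,1,0,2)`, `14,2,3 ↦ (0,1,2,0)`,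
`1,23,4 ↦ (0,1,1,2)`, `1,24,3 ↦ (0,1,2,1)`. -/
theorem skewM_tensor_skewM_in_dual_basis (q : ℕ) (hq : 3 ≤ q) :
    ∀ w1324 w1423 w1324' w1423' w1234' w1243' : Fin 4 → Fin q,
    w1324 = ![⟨0, by omega⟩, ⟨1, by omega⟩, ⟨0, by omega⟩, ⟨1, by omega⟩] →
    w1423 = ![⟨0, by omega⟩, ⟨1, by omega⟩, ⟨1, by omega⟩, ⟨0, by omega⟩] →
    w1324' = ![⟨0, by omega⟩, ⟨1, by omega⟩, ⟨0, by omega⟩, ⟨2, by omega⟩] →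
    w1423' = ![⟨0, by omega⟩, ⟨1, by omega⟩, ⟨2, by omega⟩, ⟨0, by omega⟩] →
    w1234' = ![⟨0, by omega⟩, ⟨1, by omega⟩, ⟨1, by omega⟩, ⟨2, by omega⟩] →
    w1243' = ![⟨0, by omega⟩, ⟨1, by omega⟩, ⟨2, by omega⟩, ⟨1, by omega⟩] →
    evalMM q (pattern w1324) = 6 ∧
    evalMM q (pattern w1423) = -6 ∧
    evalMM q (pattern w1324') = -6 ∧
    evalMM q (pattern w1423') = 6 ∧
    evalMM q (pattern w1234') = 6 ∧
    evalMM q (pattern w1243') = -6 ∧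
    (∀ P : Fin 4 → Fin 4 → Bool,
      P ≠ pattern w1324 → P ≠ pattern w1423 → P ≠ pattern w1324' →
      P ≠ pattern w1423' → P ≠ pattern w1234' → P ≠ pattern w1243' →
      evalMM q P = 0) := by
  intro w1 w2 w3 w4 w5 w6 h1 h2 h3 h4 h5 h6
  subst h1 h2 h3 h4 h5 h6
  have p1 : pattern (![⟨0, by omega⟩, ⟨1, by omega⟩, ⟨0, by omega⟩, ⟨1, by omega⟩] : Fin 4 → Fin q)
      = pattern (![0,1,0,1] : Fin 4 → Fin 3) :=
    pattern_eq_of_val _ _ (by intro i; fin_cases i <;> rfl)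
  have p2 : pattern (![⟨0, by omega⟩, ⟨1, by omega⟩, ⟨1, by omega⟩, ⟨0, by omega⟩] : Fin 4 → Fin q)
      = pattern (![0,1,1,0] : Fin 4 → Fin 3) :=
    pattern_eq_of_val _ _ (by intro i; fin_cases i <;> rfl)
  have p3 : pattern (![⟨0, by omega⟩, ⟨1, by omega⟩, ⟨0, by omega⟩, ⟨2, by omega⟩] : Fin 4 → Fin q)
      = pattern (![0,1,0,2] : Fin 4 → Fin 3) :=
    pattern_eq_of_val _ _ (by intro i; fin_cases i <;> rfl)
  have p4 : pattern (![⟨0, by omega⟩, ⟨1, by omega⟩, ⟨2, by omega⟩, ⟨0, by omega⟩] : Fin 4 → Fin q)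
      = pattern (![0,1,2,0] : Fin 4 → Fin 3) :=
    pattern_eq_of_val _ _ (by intro i; fin_cases i <;> rfl)
  have p5 : pattern (![⟨0, by omega⟩, ⟨1, by omega⟩, ⟨1, by omega⟩, ⟨2, by omega⟩] : Fin 4 → Fin q)
      = pattern (![0,1,1,2] : Fin 4 → Fin 3) :=
    pattern_eq_of_val _ _ (by intro i; fin_cases i <;> rfl)
  have p6 : pattern (![⟨0, by omega⟩, ⟨1, by omega⟩, ⟨2, by omega⟩, ⟨1, by omega⟩] : Fin 4 → Fin q)
      = pattern (![0,1,2,1] : Fin 4 → Fin 3) :=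
    pattern_eq_of_val _ _ (by intro i; fin_cases i <;> rfl)
  obtain ⟨e1, e2, e3, e4, e5, e6⟩ := evalZ_vals
  refine ⟨?_, ?_, ?_, ?_, ?_, ?_, ?_⟩
  · rw [evalMM_eq q hq, p1, e1]; norm_num
  · rw [evalMM_eq q hq, p2, e2]; norm_num
  · rw [evalMM_eq q hq, p3, e3]; norm_num
  · rw [evalMM_eq q hq, p4, e4]; norm_num
  · rw [evalMM_eq q hq, p5, e5]; norm_num
  · rw [evalMM_eq q hq, p6, e6]; norm_num
  · intro P hP1 hP2 hP3 hP4 hP5 hP6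
    rw [p1] at hP1; rw [p2] at hP2; rw [p3] at hP3
    rw [p4] at hP4; rw [p5] at hP5; rw [p6] at hP6
    rw [evalMM_eq q hq]
    have hz : evalZ P = 0 := by
      refine Finset.sum_eq_zero fun v _ => ?_
      by_cases hv : pattern v = P
      · rw [if_pos hv]
        by_contra hne
        rcases pattern_mem_six v hne with h | h | h | h | h | h <;>
          [exact hP1 (hv ▸ h ▸ rfl); exact hP2 (hv ▸ h ▸ rfl); exact hP3 (hv ▸ h ▸ rfl);
           exact hP4 (hv ▸ h ▸ rfl); exact hP5 (hv ▸ h ▸ rfl); exact hP6 (hv ▸ h ▸ rfl)]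
      · rw [if_neg hv]
    rw [hz]
    norm_num
end
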